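/- Let x > 1, y > 0 and t ∈ [0,1] be real, and set u = x + i t y. Then Im( 1/(u² · √(1 − 1/u)) ) ≤ 0, where √ denotes the principal branch of the complex square root. -/

import Mathlib

/-!
With `s = √(1 - 1/u)` one has `Im (1 / (u² s)) = -Im (u² s) / |u² s|²`, so it suffices that
`Im (u² s) ≥ 0`. The principal root has `Re s > 0` because `Re (1 - 1/u) > 0`, and `s` satisfies
`u s² = u - 1`; for `Re u > 1`, `Im u ≥ 0` these two facts force `Im (u² s) ≥ 0` through an
explicit polynomial identity.
-/

open Complex

namespace Complex

lemma cpow_inv_two_re_pos {w : ℂ} (hw : 0 < w.re) : 0 < (w ^ (2⁻¹ : ℂ)).re := by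
  rw [cpow_inv_two_re]
  exact Real.sqrt_pos.mpr (by positivity)

lemma one_sub_one_div_re_pos {u : ℂ} (hu : 1 < u.re) : 0 < (1 - 1 / u).re := by
  have hN : u.re < normSq u := by rw [normSq_apply]; nlinarith [mul_self_nonneg u.im]
  have hN0 : 0 < normSq u := by linarith
  rw [sub_re, one_re, one_div, inv_re, sub_pos, div_lt_one hN0]
  linarith

/-- Writing `u = X + iY`, `s = a + ib` and `N = |u|²`, the relation `u s² = u - 1` gives
`2 a N · Im (u² s) = Y (X² (4X - 3) + Y² (4X - 1)) + 4 X Y N b²`. -/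
lemma im_sq_mul_nonneg_of_mul_sq_eq_sub_one {u s : ℂ} (hu : 1 < u.re) (hu' : 0 ≤ u.im)
    (hs : 0 < s.re) (h : u * s ^ 2 = u - 1) : 0 ≤ (u ^ 2 * s).im := by
  have hre := congrArg re h
  have him := congrArg im h
  simp only [pow_two, mul_re, mul_im, sub_re, sub_im, one_re, one_im] at hre him ⊢
  set X := u.re
  set Y := u.im
  set a := s.re
  set b := s.im
  have hN : 0 < X ^ 2 + Y ^ 2 := by positivity
  have hcert : 2 * a * (X ^ 2 + Y ^ 2) * ((X * X - Y * Y) * b + (X * Y + Y * X) * a)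
      = Y * (X ^ 2 * (4 * X - 3) + Y ^ 2 * (4 * X - 1)) + 4 * X * Y * (X ^ 2 + Y ^ 2) * b ^ 2 := by
    linear_combination (X ^ 2 - Y ^ 2) * (-Y * hre + X * him) + 4 * X * Y * (X * hre + Y * him)
  have hrhs : 0 ≤ Y * (X ^ 2 * (4 * X - 3) + Y ^ 2 * (4 * X - 1))
      + 4 * X * Y * (X ^ 2 + Y ^ 2) * b ^ 2 := by
    have h3 : 0 ≤ 4 * X - 3 := by linarith
    have h1 : 0 ≤ 4 * X - 1 := by linarith
    have hX : 0 ≤ X := by linarith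
    positivity
  exact nonneg_of_mul_nonneg_right (hcert ▸ hrhs) (by positivity)

end Complex

theorem stmt_9 (x y t : ℝ) (hx : 1 < x) (hy : 0 < y) (ht : t ∈ Set.Icc (0 : ℝ) 1) :
    (1 / (((x : ℂ) + (t : ℂ) * (y : ℂ) * Complex.I) ^ 2 *
        ((1 - 1 / ((x : ℂ) + (t : ℂ) * (y : ℂ) * Complex.I)) ^ (1/2 : ℂ)))).im ≤ 0 := by
  set u : ℂ := (x : ℂ) + (t : ℂ) * (y : ℂ) * Complex.I
  have hu_re : 1 < u.re := by simpa [u] using hx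
  have hu_im : 0 ≤ u.im := by simpa [u] using mul_nonneg ht.1 hy.le
  have hu0 : u ≠ 0 := fun h => by simp [h] at hu_re; linarith
  set w := 1 - 1 / u
  have hsq : u * (w ^ (2⁻¹ : ℂ)) ^ 2 = u - 1 := by
    rw [show (2⁻¹ : ℂ) = ((2 : ℕ) : ℂ)⁻¹ by norm_num, cpow_nat_inv_pow w two_ne_zero,
      mul_sub, mul_one, mul_one_div_cancel hu0]
  have hkey := im_sq_mul_nonneg_of_mul_sq_eq_sub_one hu_re hu_im
    (cpow_inv_two_re_pos (one_sub_one_div_re_pos hu_re)) hsq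
  rw [one_div (2 : ℂ), one_div, inv_im, neg_div]
  exact neg_nonpos.mpr (div_nonneg hkey (normSq_nonneg _))
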